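/- Let bx₁, bx₂, bx₃ be transparent well-behaved bx over the same lawful monad m, with states S₁, S₂, S₃, between A and B, B and C, and C and D respectively. Then the two composites (bx₁ ⨟ bx₂) ⨟ bx₃ (with state (S₁ × S₂) × S₃) and bx₁ ⨟ (bx₂ ⨟ bx₃) (with state S₁ × (S₂ × S₃)) agree up to reassociation of the state: for all a' : A, d' : D and s₁ : S₁, s₂ : S₂, s₃ : S₃, ((bx₁ ⨟ bx₂) ⨟ bx₃).setL a' ((s₁, s₂), s₃) = (do let (_, (s₁', (s₂', s₃'))) ← (bx₁ ⨟ (bx₂ ⨟ bx₃)).setL a' (s₁, (s₂, s₃)); pure (⟨⟩, ((s₁', s₂'), s₃'))) and ((bx₁ ⨟ bx₂) ⨟ bx₃).setR d' ((s₁, s₂), s₃) = (do let (_, (s₁', (s₂', s₃'))) ← (bx₁ ⨟ (bx₂ ⨟ bx₃)).setR d' (s₁, (s₂, s₃)); pure (⟨⟩, ((s₁', s₂'), s₃'))). (These are the component equations witnessing the associativity law of bx composition up to the reassociation isomorphism of state spaces.) -/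

import Mathlib

universe u v

def getsS {m : Type u → Type v} [Monad m] {σ α : Type u} (f : σ → α) : StateT σ m α := do
  let s ← get
  pure (f s)

/-- A transparent bidirectional transformation over the monad `m`,
with state space `S`, between `A` and `B`. -/
structure TBX (m : Type u → Type v) (S A B : Type u) where
  readL : S → A
  readR : S → B
  setL : A → StateT S m PUnit
  setR : B → StateT S m PUnit

/-- Well-behavedness of a transparent bx: the laws (S_LG_L), (G_LS_L), (S_RG_R), (G_RS_R).
(The get–get laws hold automatically since the gets are `T`-pure queries.) -/
structure TBX.WellBehaved {m : Type u → Type v} [Monad m] {S A B : Type u}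
    (bx : TBX m S A B) : Prop where
  slgl : ∀ a : A, (do bx.setL a; getsS (m := m) bx.readL) = (do bx.setL a; pure a)
  glsl : (do let a ← getsS (m := m) bx.readL; bx.setL a) = (pure PUnit.unit : StateT S m PUnit)
  srgr : ∀ b : B, (do bx.setR b; getsS (m := m) bx.readR) = (do bx.setR b; pure b)
  grsr : (do let b ← getsS (m := m) bx.readR; bx.setR b) = (pure PUnit.unit : StateT S m PUnit)

/-- Composition of transparent bx. -/
def TBX.comp {m : Type u → Type v} [Monad m] {S₁ S₂ A B C : Type u}
    (bx₁ : TBX m S₁ A B) (bx₂ : TBX m S₂ B C) : TBX m (S₁ × S₂) A C where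
  readL := fun s => bx₁.readL s.1
  readR := fun s => bx₂.readR s.2
  setL := fun a' => fun s => do
    let (_, s₁') ← (bx₁.setL a').run s.1
    let (_, s₂') ← (bx₂.setL (bx₁.readR s₁')).run s.2
    pure (PUnit.unit, (s₁', s₂'))
  setR := fun c' => fun s => do
    let (_, s₂') ← (bx₂.setR c').run s.2
    let (_, s₁') ← (bx₁.setR (bx₂.readL s₂')).run s.1
    pure (PUnit.unit, (s₁', s₂'))

/-! Associativity of composition holds for arbitrary transparent bx, by the monad laws alone:
both nestings run the three component setters in sequence, each one fed the view that the
previous one leaves behind, and differ only in how the three final states are paired. -/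

namespace TBX

variable {m : Type u → Type v} [Monad m] {S₁ S₂ A B C : Type u}
  (bx₁ : TBX m S₁ A B) (bx₂ : TBX m S₂ B C)

theorem readL_comp : (bx₁.comp bx₂).readL = fun s => bx₁.readL s.1 := rfl

theorem readR_comp : (bx₁.comp bx₂).readR = fun s => bx₂.readR s.2 := rfl

/-- Stated with projections rather than the pattern-matching binds of `TBX.comp`, so that `simp` can
reassociate the binds of nested composites. -/
theorem run_comp_setL (a : A) (s : S₁ × S₂) :
    ((bx₁.comp bx₂).setL a).run s =
      (bx₁.setL a).run s.1 >>= fun p => (bx₂.setL (bx₁.readR p.2)).run s.2 >>= fun q =>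
        pure (PUnit.unit, (p.2, q.2)) :=
  rfl

theorem run_comp_setR (c : C) (s : S₁ × S₂) :
    ((bx₁.comp bx₂).setR c).run s =
      (bx₂.setR c).run s.2 >>= fun q => (bx₁.setR (bx₂.readL q.2)).run s.1 >>= fun p =>
        pure (PUnit.unit, (p.2, q.2)) :=
  rfl

end TBX

theorem comp_assoc_up_to_reassociation
    {m : Type u → Type v} [Monad m] [LawfulMonad m] {S₁ S₂ S₃ A B C D : Type u}
    (bx₁ : TBX m S₁ A B) (bx₂ : TBX m S₂ B C) (bx₃ : TBX m S₃ C D) :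
    (∀ (a' : A) (s₁ : S₁) (s₂ : S₂) (s₃ : S₃),
      (((bx₁.comp bx₂).comp bx₃).setL a').run ((s₁, s₂), s₃) =
        (do let (_, s₁', s₂', s₃') ← ((bx₁.comp (bx₂.comp bx₃)).setL a').run (s₁, (s₂, s₃))
            pure (PUnit.unit, ((s₁', s₂'), s₃')))) ∧
    (∀ (d' : D) (s₁ : S₁) (s₂ : S₂) (s₃ : S₃),
      (((bx₁.comp bx₂).comp bx₃).setR d').run ((s₁, s₂), s₃) =
        (do let (_, s₁', s₂', s₃') ← ((bx₁.comp (bx₂.comp bx₃)).setR d').run (s₁, (s₂, s₃))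
            pure (PUnit.unit, ((s₁', s₂'), s₃')))) := by
  constructor
  · intro a' s₁ s₂ s₃
    simp only [TBX.run_comp_setL, TBX.readR_comp, bind_assoc, pure_bind]
  · intro d' s₁ s₂ s₃
    simp only [TBX.run_comp_setR, TBX.readL_comp, bind_assoc, pure_bind]
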